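/- In the four-state two-player type space with Π₁={{ω₁,ω₂},{ω₃,ω₄}}, Π₂={{ω₁,ω₄},{ω₂,ω₃}}, t₁(ω₁)=t₁(ω₂)=(1/2,1/2,0,0), t₁(ω₃)=t₁(ω₄)=(0,0,1/2,1/2), t₂(ω₁)=t₂(ω₄)=(1/2,0,0,1/2), t₂(ω₂)=t₂(ω₃)=(0,1/2,1/2,0), the uniform distribution p=(1/4,1/4,1/4,1/4) lies in the convex hull of each player's types, and it is the unique such distribution. Moreover, there is no acceptable bet: there is no pair (f₁,f₂) with f₁+f₂=0, ∫ fᵢ dtᵢ(ω,·) ≥ 0 for all i and ω, and ∫ fᵢ* dtᵢ*(ω*,·) > 0 for some player i* and state ω*. -/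

import Mathlib

/-!
A type of player `i` is uniform on a cell of `Πᵢ`, so every point of the convex hull of player
`i`'s types is constant on the cells of `Πᵢ` and has total mass one. The meet of `Π₁` and `Π₂`
is trivial, so only the uniform distribution is constant on the cells of both.

The uniform prior is the equal-weight average of each player's four types. Averaging the
expected gains of a bet with these positive weights turns them into `∑ₐ (f₁ a + f₂ a) p a = 0`,
so nonnegative expected gains cannot include a positive one.
-/

open Finset

noncomputable def t1Ex : Fin 4 → Fin 4 → ℝ :=
  ![![1/2, 1/2, 0, 0], ![1/2, 1/2, 0, 0], ![0, 0, 1/2, 1/2], ![0, 0, 1/2, 1/2]]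

noncomputable def t2Ex : Fin 4 → Fin 4 → ℝ :=
  ![![1/2, 0, 0, 1/2], ![0, 1/2, 1/2, 0], ![0, 1/2, 1/2, 0], ![1/2, 0, 0, 1/2]]

noncomputable def pEx : Fin 4 → ℝ := ![1/4, 1/4, 1/4, 1/4]

section ConvexHull

variable {ι E F : Type*} [AddCommGroup E] [Module ℝ E] [AddCommGroup F] [Module ℝ F]

theorem LinearMap.apply_eq_of_mem_convexHull_range (φ : E →ₗ[ℝ] F) {t : ι → E} {c : F}
    (h : ∀ i, φ (t i) = c) {x : E} (hx : x ∈ convexHull ℝ (Set.range t)) : φ x = c :=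
  convexHull_min (Set.range_subset_iff.2 h) ((convex_singleton c).linear_preimage φ) hx

variable {α : Type*} {t : ι → α → ℝ} {q : α → ℝ}

theorem apply_eq_apply_of_mem_convexHull_range {a b : α} (h : ∀ i, t i a = t i b)
    (hq : q ∈ convexHull ℝ (Set.range t)) : q a = q b :=
  sub_eq_zero.1 <| ((LinearMap.proj a : (α → ℝ) →ₗ[ℝ] ℝ) - LinearMap.proj b)
    |>.apply_eq_of_mem_convexHull_range (fun i => sub_eq_zero.2 (h i)) hq

theorem sum_eq_one_of_mem_convexHull_range [Fintype α] (h : ∀ i, ∑ a, t i a = 1)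
    (hq : q ∈ convexHull ℝ (Set.range t)) : ∑ a, q a = 1 := by
  simpa using (∑ a, (LinearMap.proj a : (α → ℝ) →ₗ[ℝ] ℝ)).apply_eq_of_mem_convexHull_range
    (fun i => by simpa using h i) hq

end ConvexHull

section Bet

variable {Ω : Type*} [Fintype Ω]

def IsAcceptableBet (t₁ t₂ : Ω → Ω → ℝ) (f₁ f₂ : Ω → ℝ) : Prop :=
  (∀ ω, f₁ ω + f₂ ω = 0) ∧ (∀ ω, 0 ≤ f₁ ⬝ᵥ t₁ ω) ∧ (∀ ω, 0 ≤ f₂ ⬝ᵥ t₂ ω) ∧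
    ∃ ω, 0 < f₁ ⬝ᵥ t₁ ω ∨ 0 < f₂ ⬝ᵥ t₂ ω

theorem not_isAcceptableBet_of_sum_smul_eq {t₁ t₂ : Ω → Ω → ℝ} {w₁ w₂ : Ω → ℝ}
    (hw₁ : ∀ ω, 0 < w₁ ω) (hw₂ : ∀ ω, 0 < w₂ ω) (h : ∑ ω, w₁ ω • t₁ ω = ∑ ω, w₂ ω • t₂ ω)
    (f₁ f₂ : Ω → ℝ) : ¬ IsAcceptableBet t₁ t₂ f₁ f₂ := by
  rintro ⟨hf, h₁, h₂, ω, hpos⟩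
  have hzero : ∑ ω, w₁ ω * (f₁ ⬝ᵥ t₁ ω) + ∑ ω, w₂ ω * (f₂ ⬝ᵥ t₂ ω) = 0 := by
    have hf' : f₁ + f₂ = 0 := funext hf
    simp only [← smul_eq_mul, ← dotProduct_smul, ← dotProduct_sum, h, ← add_dotProduct, hf',
      zero_dotProduct]
  have hnonneg₁ : ∀ ω ∈ univ, 0 ≤ w₁ ω * (f₁ ⬝ᵥ t₁ ω) := fun ω _ => mul_nonneg (hw₁ ω).le (h₁ ω)
  have hnonneg₂ : ∀ ω ∈ univ, 0 ≤ w₂ ω * (f₂ ⬝ᵥ t₂ ω) := fun ω _ => mul_nonneg (hw₂ ω).le (h₂ ω)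
  rcases hpos with hpos | hpos
  · have := sum_pos' hnonneg₁ ⟨ω, mem_univ _, mul_pos (hw₁ ω) hpos⟩
    linarith [sum_nonneg hnonneg₂]
  · have := sum_pos' hnonneg₂ ⟨ω, mem_univ _, mul_pos (hw₂ ω) hpos⟩
    linarith [sum_nonneg hnonneg₁]

end Bet

theorem sum_smul_t1Ex : ∑ ω, (1/4 : ℝ) • t1Ex ω = pEx := by
  ext a; fin_cases a <;> simp [Fin.sum_univ_four, t1Ex, pEx] <;> norm_num

theorem sum_smul_t2Ex : ∑ ω, (1/4 : ℝ) • t2Ex ω = pEx := by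
  ext a; fin_cases a <;> simp [Fin.sum_univ_four, t2Ex, pEx] <;> norm_num

theorem sum_t1Ex (ω : Fin 4) : ∑ a, t1Ex ω a = 1 := by
  fin_cases ω <;> simp [Fin.sum_univ_four, t1Ex] <;> norm_num

theorem t1Ex_cells (ω : Fin 4) : t1Ex ω 0 = t1Ex ω 1 ∧ t1Ex ω 2 = t1Ex ω 3 := by
  fin_cases ω <;> exact ⟨rfl, rfl⟩

theorem t2Ex_cells (ω : Fin 4) : t2Ex ω 0 = t2Ex ω 3 ∧ t2Ex ω 1 = t2Ex ω 2 := by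
  fin_cases ω <;> exact ⟨rfl, rfl⟩

theorem eq_pEx_of_mem_convexHull {q : Fin 4 → ℝ} (h₁ : q ∈ convexHull ℝ (Set.range t1Ex))
    (h₂ : q ∈ convexHull ℝ (Set.range t2Ex)) : q = pEx := by
  have h01 := apply_eq_apply_of_mem_convexHull_range (fun ω => (t1Ex_cells ω).1) h₁
  have h23 := apply_eq_apply_of_mem_convexHull_range (fun ω => (t1Ex_cells ω).2) h₁
  have h03 := apply_eq_apply_of_mem_convexHull_range (fun ω => (t2Ex_cells ω).1) h₂
  have h12 := apply_eq_apply_of_mem_convexHull_range (fun ω => (t2Ex_cells ω).2) h₂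
  have hmass := sum_eq_one_of_mem_convexHull_range sum_t1Ex h₁
  rw [Fin.sum_univ_four] at hmass
  ext a
  fin_cases a <;> simp [pEx] <;> linarith

/-- the uniform distribution is the unique distribution in the convex hull
of each player's types, and there is no acceptable bet `(f₁, f₂)`. -/
theorem stmt_12 :
    (pEx ∈ convexHull ℝ (Set.range t1Ex) ∧ pEx ∈ convexHull ℝ (Set.range t2Ex)) ∧
    (∀ q : Fin 4 → ℝ,
      q ∈ convexHull ℝ (Set.range t1Ex) → q ∈ convexHull ℝ (Set.range t2Ex) → q = pEx) ∧
    ¬ ∃ f1 f2 : Fin 4 → ℝ,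
        (∀ ω, f1 ω + f2 ω = 0) ∧
        (∀ ω, 0 ≤ ∑ a, f1 a * t1Ex ω a) ∧ (∀ ω, 0 ≤ ∑ a, f2 a * t2Ex ω a) ∧
        (∃ ω, (0 < ∑ a, f1 a * t1Ex ω a) ∨ (0 < ∑ a, f2 a * t2Ex ω a)) := by
  have hweights : ∑ _ω : Fin 4, (1/4 : ℝ) = 1 := by norm_num
  refine ⟨⟨?_, ?_⟩, fun q => eq_pEx_of_mem_convexHull, ?_⟩
  · exact mem_convexHull_of_exists_fintype _ _ (by norm_num) hweights Set.mem_range_self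
      sum_smul_t1Ex
  · exact mem_convexHull_of_exists_fintype _ _ (by norm_num) hweights Set.mem_range_self
      sum_smul_t2Ex
  · rintro ⟨f₁, f₂, hbet⟩
    exact not_isAcceptableBet_of_sum_smul_eq (fun _ => by norm_num) (fun _ => by norm_num)
      (sum_smul_t1Ex.trans sum_smul_t2Ex.symm) f₁ f₂ hbet
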